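/- Let T be an order tree, G a T-graph. Then the following are equivalent: (1) for every limit ordinal σ, all connected components of G − T^{≤σ} have finite neighbourhoods; (2) for every ordinal σ, all components of G − T^{≤σ} have finite neighbourhoods; (3) for every successor node t ∈ T, the up-closure ⌊t⌋ = {s : s ≥ t} has finite neighbourhood in G. -/

import Mathlib

noncomputable def omega1 : Ordinal := (Cardinal.aleph 1).ord

/-- An order tree: a partial order with a least element (root), whose strict
down-sets are chains and whose strict order is well-founded (hence every
down-set is well-ordered). -/
def IsOrderTree (T : Type*) [PartialOrder T] : Prop :=
  (∃ r : T, ∀ t, r ≤ t) ∧ (∀ t : T, IsChain (· ≤ ·) {s | s < t}) ∧ WellFoundedLT T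

/-- `ht` is the height (rank) function of the tree: the height of a node is the
supremum of the successors of the heights of the nodes strictly below it; for an
order tree this is the order type of its strict down-set. -/
def IsHeightFun {T : Type*} [PartialOrder T] (ht : T → Ordinal) : Prop :=
  ∀ t, ht t = sSup ((fun s => ht s + 1) '' {s | s < t})

/-- An `ω₁`-tree: height `ω₁` and all levels countable. -/
def IsOmegaOneTree {T : Type*} [PartialOrder T] (ht : T → Ordinal) : Prop :=
  (∀ t, ht t < omega1) ∧ (∀ o < omega1, ∃ t, ht t = o) ∧
  (∀ o : Ordinal, {t | ht t = o}.Countable)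

/-- An Aronszajn tree has no uncountable branch (chain). -/
def NoUncountableBranch (T : Type*) [PartialOrder T] : Prop :=
  ∀ B : Set T, IsChain (· ≤ ·) B → B.Countable

/-- A tree is special if it is a countable union of antichains. -/
def IsSpecialTree (T : Type*) [PartialOrder T] : Prop :=
  ∃ A : ℕ → Set T, (∀ n, IsAntichain (· ≤ ·) (A n)) ∧ (⋃ n, A n) = Set.univ

/-- A successor node: its strict down-set has a maximum. -/
def IsSuccNode {T : Type*} [PartialOrder T] (t : T) : Prop :=
  ∃ m, m < t ∧ ∀ s, s < t → s ≤ m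

/-- The neighbourhood of a vertex set `X` in `G`: vertices outside `X` adjacent
to some vertex of `X`. -/
def nbhd {V : Type*} (G : SimpleGraph V) (X : Set V) : Set V :=
  {v | v ∉ X ∧ ∃ x ∈ X, G.Adj v x}

/-- `s` lies in the component of `t` in `G − T^{≤σ}`: there is a walk from `t`
to `s` all of whose vertices have height `> σ`. -/
def SameCompAbove {T : Type*} [PartialOrder T] (G : SimpleGraph T)
    (ht : T → Ordinal) (σ : Ordinal) (t s : T) : Prop :=
  ∃ w : G.Walk t s, ∀ x ∈ w.support, σ < ht x


/-!
Every component `C` of `G − T^{≤σ}` is an up-closure `⌊m⌋`. Take `m` minimal in `C`. A node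
`b < m` of height `> σ` would, by cofinality of the lower neighbours of `m`, put a lower
neighbour of `m` into `C`; so everything below `m` has height `≤ σ`, walks in `G − T^{≤σ}`
cannot leave `⌊m⌋`, and the highest node of height `≥ σ` below `m` is its predecessor.
Conversely, if `t` has predecessor `p` then `⌊t⌋` is the component of `t` above `ht p`.
This gives (2) ⇔ (3).

For (1) ⇒ (3): the neighbourhood `N` of `⌊t⌋` lies in the chain below `t`, so the height map is
injective on `N`. If `N` is infinite, the least ordinal `l` below which infinitely many of these
heights lie is a limit with `l ≤ ht p`, and the component of `t` above `l` contains `⌊t⌋`, so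
its neighbourhood contains infinitely many nodes of `N`.
-/

open Set SimpleGraph Order

theorem Ordinal.exists_isSuccLimit_le_infinite_inter_Iio {H : Set Ordinal} (hH : H.Infinite)
    {b : Ordinal} (hb : H ⊆ Iic b) :
    ∃ l ≤ b, IsSuccLimit l ∧ (H ∩ Iio l).Infinite := by
  set S : Set Ordinal := {o | (H ∩ Iio o).Infinite}
  have hbS : succ b ∈ S := by
    rwa [mem_ofPred_eq, Iio_succ, inter_eq_left.mpr hb]
  have hlS : sInf S ∈ S := csInf_mem ⟨_, hbS⟩
  have hlim : IsSuccLimit (sInf S) := by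
    rcases Ordinal.zero_or_succ_or_isSuccLimit (sInf S) with h0 | ⟨o, ho⟩ | hlim
    · simp [S, h0] at hlS
    · have hoS : o ∈ S := by
        refine fun hfin => hlS ((hfin.union (finite_singleton o)).subset ?_)
        rintro v ⟨hv, hvl⟩
        rw [← ho, Iio_succ, mem_Iic] at hvl
        rcases hvl.lt_or_eq with hvo | rfl
        exacts [Or.inl ⟨hv, hvo⟩, Or.inr rfl]
      exact absurd (csInf_le' hoS) (not_le.mpr (ho ▸ lt_succ o))
    · exact hlim
  refine ⟨sInf S, ?_, hlim, hlS⟩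
  exact lt_succ_iff.mp ((csInf_le' hbS).lt_of_ne (hlim.succ_ne b).symm)

section Height

variable {T : Type} [PartialOrder T] {ht : T → Ordinal}

theorem IsHeightFun.strictMono (hht : IsHeightFun ht) : StrictMono ht := fun s t hst =>
  (lt_add_one (ht s)).trans_le <| (hht t).symm ▸
    le_csSup Ordinal.bddAbove_of_small ⟨s, hst, rfl⟩

theorem IsHeightFun.exists_lt_le (hht : IsHeightFun ht) {σ : Ordinal} {t : T}
    (hσ : σ < ht t) : ∃ s < t, σ ≤ ht s := by
  by_contra! h
  refine hσ.not_ge ((hht t).symm ▸ csSup_le' ?_)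
  rintro _ ⟨s, hs, rfl⟩
  exact add_one_le_of_lt (h s hs)

theorem isChain_Iic_of_isChain_Iio (hchain : ∀ t : T, IsChain (· ≤ ·) {s | s < t}) (t : T) :
    IsChain (· ≤ ·) (Iic t) := by
  intro x hx y hy hxy
  rcases hx.lt_or_eq with hx | rfl
  · rcases hy.lt_or_eq with hy | rfl
    · exact hchain t hx hy hxy
    · exact Or.inl hx.le
  · exact Or.inr hy

theorem StrictMono.injOn_of_isChain {α β : Type*} [PartialOrder α] [Preorder β] {f : α → β}
    (hf : StrictMono f) {s : Set α} (hs : IsChain (· ≤ ·) s) : InjOn f s := by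
  intro x hx y hy hxy
  by_contra hne
  rcases hs hx hy hne with h | h
  exacts [(hf (h.lt_of_ne hne)).ne hxy, (hf (h.lt_of_ne' hne)).ne' hxy]

theorem isSuccNode_of_forall_lt_ht_le (hht : IsHeightFun ht)
    (hchain : ∀ t : T, IsChain (· ≤ ·) {s | s < t}) {σ : Ordinal} {m : T} (hσ : σ < ht m)
    (hlow : ∀ b < m, ht b ≤ σ) : IsSuccNode m := by
  obtain ⟨p, hpm, hσp⟩ := hht.exists_lt_le hσ
  refine ⟨p, hpm, fun s hs => ?_⟩
  rcases eq_or_ne s p with rfl | hne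
  · exact le_rfl
  rcases hchain m hs hpm hne with h | h
  · exact h
  · exact absurd ((hht.strictMono (h.lt_of_ne' hne)).trans_le (hlow s hs)) hσp.not_gt

end Height

namespace SameCompAbove

variable {T : Type} [PartialOrder T] {G : SimpleGraph T} {ht : T → Ordinal} {σ : Ordinal}

theorem refl {t : T} (h : σ < ht t) : SameCompAbove G ht σ t t :=
  ⟨Walk.nil, by simpa using h⟩

theorem symm {t s : T} (h : SameCompAbove G ht σ t s) : SameCompAbove G ht σ s t :=
  let ⟨w, hw⟩ := h
  ⟨w.reverse, fun x hx => hw x (by simpa using hx)⟩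

theorem trans {a b c : T} (h₁ : SameCompAbove G ht σ a b) (h₂ : SameCompAbove G ht σ b c) :
    SameCompAbove G ht σ a c :=
  let ⟨w₁, hw₁⟩ := h₁
  let ⟨w₂, hw₂⟩ := h₂
  ⟨w₁.append w₂, fun x hx => (w₁.mem_support_append_iff w₂).mp hx |>.elim (hw₁ x) (hw₂ x)⟩

theorem lt_ht {t s : T} (h : SameCompAbove G ht σ t s) : σ < ht s :=
  let ⟨w, hw⟩ := h
  hw s w.end_mem_support

theorem concat {t s u : T} (h : SameCompAbove G ht σ t s) (hsu : G.Adj s u) (hu : σ < ht u) :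
    SameCompAbove G ht σ t u := by
  refine h.trans ⟨hsu.toWalk, fun x hx => ?_⟩
  rcases List.mem_pair.mp (by simpa using hx) with rfl | rfl
  exacts [h.lt_ht, hu]

end SameCompAbove

section TGraph

variable {T : Type} [PartialOrder T] {G : SimpleGraph T} {ht : T → Ordinal} {σ : Ordinal}

theorem sameCompAbove_of_le [WellFoundedLT T] (hmono : Monotone ht)
    (hlowcof : ∀ t s : T, s < t → ∃ u, G.Adj u t ∧ u < t ∧ s ≤ u) {t : T} (hσ : σ < ht t)
    {s : T} (hts : t ≤ s) : SameCompAbove G ht σ t s := by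
  induction s using WellFoundedLT.induction with
  | _ s ih =>
    rcases hts.lt_or_eq with hts | rfl
    · obtain ⟨u, hus, hu, htu⟩ := hlowcof s t hts
      exact (ih u hu htu).concat hus (hσ.trans_le (hmono hts.le))
    · exact .refl hσ

theorem le_of_sameCompAbove (hchain : ∀ t : T, IsChain (· ≤ ·) {s | s < t})
    (hcomp : ∀ a b : T, G.Adj a b → a < b ∨ b < a) {m : T} (hlow : ∀ b < m, ht b ≤ σ)
    {a s : T} (h : SameCompAbove G ht σ a s) (hma : m ≤ a) : m ≤ s := by
  obtain ⟨w, hw⟩ := h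
  induction w with
  | nil => exact hma
  | @cons a b s hab w ih =>
    refine ih ?_ (fun x hx => hw x (w.support_subset_support_cons hab hx))
    have hb : σ < ht b := hw b (by simp)
    rcases hcomp a b hab with hab | hba
    · exact hma.trans hab.le
    · rcases isChain_Iic_of_isChain_Iio hchain a |>.total hma hba.le with hmb | hbm
      · exact hmb
      · rcases hbm.lt_or_eq with hbm | rfl
        exacts [absurd (hlow b hbm) hb.not_ge, le_rfl]

theorem setOf_sameCompAbove_eq_Ici [WellFoundedLT T] (hmono : Monotone ht)
    (hchain : ∀ t : T, IsChain (· ≤ ·) {s | s < t})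
    (hcomp : ∀ a b : T, G.Adj a b → a < b ∨ b < a)
    (hlowcof : ∀ t s : T, s < t → ∃ u, G.Adj u t ∧ u < t ∧ s ≤ u) {t m : T}
    (hm : SameCompAbove G ht σ t m) (hlow : ∀ b < m, ht b ≤ σ) :
    {s | SameCompAbove G ht σ t s} = Ici m :=
  Set.ext fun _ => ⟨fun hs => le_of_sameCompAbove hchain hcomp hlow (hm.symm.trans hs) le_rfl,
    fun hms => hm.trans (sameCompAbove_of_le hmono hlowcof hm.lt_ht hms)⟩

theorem exists_isSuccNode_setOf_sameCompAbove_eq_Ici [WellFoundedLT T] (hht : IsHeightFun ht)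
    (hchain : ∀ t : T, IsChain (· ≤ ·) {s | s < t})
    (hcomp : ∀ a b : T, G.Adj a b → a < b ∨ b < a)
    (hlowcof : ∀ t s : T, s < t → ∃ u, G.Adj u t ∧ u < t ∧ s ≤ u) {t : T} (hσ : σ < ht t) :
    ∃ m, IsSuccNode m ∧ {s | SameCompAbove G ht σ t s} = Ici m := by
  obtain ⟨m, hm, hmin⟩ := wellFounded_lt.has_min {s | SameCompAbove G ht σ t s}
    ⟨t, .refl hσ⟩
  have hlow : ∀ b < m, ht b ≤ σ := by
    intro b hbm
    by_contra! hb
    obtain ⟨u, hum, hu, hbu⟩ := hlowcof m b hbm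
    exact hmin u (hm.concat hum.symm (hb.trans_le (hht.strictMono.monotone hbu))) hu
  exact ⟨m, isSuccNode_of_forall_lt_ht_le hht hchain hm.lt_ht hlow,
    setOf_sameCompAbove_eq_Ici hht.strictMono.monotone hchain hcomp hlowcof hm hlow⟩

theorem nbhd_Ici_subset_Iio (hchain : ∀ t : T, IsChain (· ≤ ·) {s | s < t})
    (hcomp : ∀ a b : T, G.Adj a b → a < b ∨ b < a) (t : T) : nbhd G (Ici t) ⊆ Iio t := by
  rintro v ⟨hv, x, htx, hvx⟩
  rcases hcomp v x hvx with hvx | hxv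
  · rcases isChain_Iic_of_isChain_Iio hchain x |>.total htx hvx.le with htv | hvt
    exacts [absurd htv hv, hvt.lt_of_not_ge hv]
  · exact absurd (htx.trans hxv.le) hv

theorem nbhd_Ici_finite_of_isSuccNode [WellFoundedLT T] (hht : IsHeightFun ht)
    (hchain : ∀ t : T, IsChain (· ≤ ·) {s | s < t})
    (hcomp : ∀ a b : T, G.Adj a b → a < b ∨ b < a)
    (hlowcof : ∀ t s : T, s < t → ∃ u, G.Adj u t ∧ u < t ∧ s ≤ u)
    (hfin : ∀ σ : Ordinal, IsSuccLimit σ → ∀ t : T, σ < ht t →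
      (nbhd G {s | SameCompAbove G ht σ t s}).Finite)
    {t : T} (htsucc : IsSuccNode t) : (nbhd G (Ici t)).Finite := by
  obtain ⟨p, hpt, hp⟩ := htsucc
  by_contra hinf
  have hNp : nbhd G (Ici t) ⊆ Iic p := fun v hv => hp v (nbhd_Ici_subset_Iio hchain hcomp t hv)
  have hinj : InjOn ht (nbhd G (Ici t)) :=
    hht.strictMono.injOn_of_isChain ((isChain_Iic_of_isChain_Iio hchain p).mono hNp)
  obtain ⟨l, hlp, hl, hinf_l⟩ := Ordinal.exists_isSuccLimit_le_infinite_inter_Iio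
    (Set.Infinite.image hinj hinf)
    (image_subset_iff.mpr fun v hv => hht.strictMono.monotone (hNp hv))
  have hlt : l < ht t := hlp.trans_lt (hht.strictMono hpt)
  refine hinf_l (((hfin l hl t hlt).image ht).subset ?_)
  rintro _ ⟨⟨v, ⟨-, x, htx, hvx⟩, rfl⟩, hvl⟩
  exact ⟨v, ⟨fun h => lt_asymm h.lt_ht hvl,
    x, sameCompAbove_of_le hht.strictMono.monotone hlowcof hlt htx, hvx⟩, rfl⟩

end TGraph

/-- For a `T`-graph `G` the following are equivalent: (1) for every limit
ordinal `σ` all components of `G − T^{≤σ}` have finite neighbourhoods; (2) the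
same for every ordinal `σ`; (3) every up-closure `⌊t⌋` of a successor node `t`
has finite neighbourhood. -/
theorem finite_adhesion_tfae {T : Type} [PartialOrder T]
    (ht : T → Ordinal) (htree : IsOrderTree T) (hht : IsHeightFun ht)
    (G : SimpleGraph T)
    (hcomp : ∀ a b : T, G.Adj a b → a < b ∨ b < a)
    (hlowcof : ∀ t s : T, s < t → ∃ u, G.Adj u t ∧ u < t ∧ s ≤ u) :
    ((∀ σ : Ordinal, Order.IsSuccLimit σ → ∀ t : T, σ < ht t →
        (nbhd G {s | SameCompAbove G ht σ t s}).Finite) ↔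
      (∀ σ : Ordinal, ∀ t : T, σ < ht t →
        (nbhd G {s | SameCompAbove G ht σ t s}).Finite)) ∧
    ((∀ σ : Ordinal, ∀ t : T, σ < ht t →
        (nbhd G {s | SameCompAbove G ht σ t s}).Finite) ↔
      (∀ t : T, IsSuccNode t → (nbhd G {s | t ≤ s}).Finite)) := by
  obtain ⟨-, hchain, _⟩ := htree
  have h2_of_h3 : (∀ t : T, IsSuccNode t → (nbhd G {s | t ≤ s}).Finite) →
      ∀ σ : Ordinal, ∀ t : T, σ < ht t → (nbhd G {s | SameCompAbove G ht σ t s}).Finite := by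
    intro h3 σ t hσ
    obtain ⟨m, hm, hcomp_eq⟩ :=
      exists_isSuccNode_setOf_sameCompAbove_eq_Ici hht hchain hcomp hlowcof hσ
    exact hcomp_eq ▸ h3 m hm
  have h3_of_h2 : (∀ σ : Ordinal, ∀ t : T, σ < ht t →
      (nbhd G {s | SameCompAbove G ht σ t s}).Finite) →
      ∀ t : T, IsSuccNode t → (nbhd G {s | t ≤ s}).Finite := by
    rintro h2 t ⟨p, hpt, hp⟩
    have hσ : ht p < ht t := hht.strictMono hpt
    have h := h2 _ t hσ
    rwa [setOf_sameCompAbove_eq_Ici hht.strictMono.monotone hchain hcomp hlowcof (.refl hσ)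
      fun b hb => hht.strictMono.monotone (hp b hb)] at h
  have h3_of_h1 := fun h1 t =>
    nbhd_Ici_finite_of_isSuccNode (t := t) hht hchain hcomp hlowcof h1
  exact ⟨⟨fun h1 => h2_of_h3 (h3_of_h1 h1), fun h2 σ _ => h2 σ⟩, h3_of_h2, h2_of_h3⟩
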